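/- Let p : 2^V → ℤ be skew-supermodular and (H = (V, E), w) a weighted hypergraph such that every hyperedge e ∈ E is contained in some (p, H, w)-tight set, b_{(H,w)}({u}) ≠ 0 for every u ∈ V, and b_{(H,w)}(X) ≥ p(X) for all X ⊆ V. Then the family of inclusion-wise maximal (p, H, w)-tight sets is a disjoint family. -/

import Mathlib

/-!
Coverage is submodular, and strictly posimodular on `X, T` whenever an edge inside `T` meets
`X`. For such a pair of tight sets, skew-supermodularity of `p ≤ coverage` therefore forces the
supermodular alternative, and `X ∪ T` is tight. So a maximal tight set contains every tight set
that contains an edge meeting it. If maximal tight `X ≠ Y` share a vertex `u`, take an edge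
`e ∋ u` (positive degree) and a tight `T ⊇ e`: then `T ⊆ X ∩ Y`, whence `Y ⊆ X` and `X ⊆ Y`.
-/
/-- Coverage function of a weighted hypergraph. -/
def coverage {V : Type*} [DecidableEq V] (E : Finset (Finset V)) (w : Finset V → ℕ)
    (X : Finset V) : ℤ :=
  ∑ e ∈ E.filter (fun e => (e ∩ X).Nonempty), (w e : ℤ)

/-- Skew-supermodularity. -/
def SkewSupermodular {V : Type*} [DecidableEq V] (p : Finset V → ℤ) : Prop :=
  ∀ X Y : Finset V, p X + p Y ≤ p (X ∩ Y) + p (X ∪ Y) ∨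
    p X + p Y ≤ p (X \ Y) + p (Y \ X)

open Finset

section Hypergraph

variable {V : Type*} [DecidableEq V]

def IsTight (E : Finset (Finset V)) (w : Finset V → ℕ) (p : Finset V → ℤ) (X : Finset V) :
    Prop :=
  coverage E w X = p X

section Coverage

variable (E : Finset (Finset V)) (w : Finset V → ℕ)

lemma coverage_eq_sum_ite (X : Finset V) :
    coverage E w X = ∑ e ∈ E, if (e ∩ X).Nonempty then (w e : ℤ) else 0 :=
  sum_filter _ _

lemma coverage_inter_add_coverage_union_le (X Y : Finset V) :
    coverage E w (X ∩ Y) + coverage E w (X ∪ Y) ≤ coverage E w X + coverage E w Y := by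
  simp only [coverage_eq_sum_ite, ← sum_add_distrib]
  refine sum_le_sum fun e _ => ?_
  have hX : (e ∩ (X ∩ Y)).Nonempty → (e ∩ X).Nonempty :=
    fun h => h.mono (inter_subset_inter_left inter_subset_left)
  have hY : (e ∩ (X ∩ Y)).Nonempty → (e ∩ Y).Nonempty :=
    fun h => h.mono (inter_subset_inter_left inter_subset_right)
  have hXY : (e ∩ (X ∪ Y)).Nonempty → (e ∩ X).Nonempty ∨ (e ∩ Y).Nonempty := by
    rw [inter_union_distrib_left, union_nonempty]
    exact id
  split_ifs <;> simp_all

lemma coverage_sdiff_add_coverage_sdiff_lt {X T e : Finset V} (he : e ∈ E) (hwe : 0 < w e)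
    (heT : e ⊆ T) (heX : (e ∩ X).Nonempty) :
    coverage E w (X \ T) + coverage E w (T \ X) < coverage E w X + coverage E w T := by
  simp only [coverage_eq_sum_ite, ← sum_add_distrib]
  have term_mono (f A B : Finset V) (hAB : A ⊆ B) :
      (if (f ∩ A).Nonempty then (w f : ℤ) else 0) ≤ if (f ∩ B).Nonempty then (w f : ℤ) else 0 := by
    split_ifs with hA hB <;> first | omega | exact absurd (hA.mono (inter_subset_inter_left hAB)) hB
  refine sum_lt_sum (fun f _ => add_le_add (term_mono f _ _ sdiff_subset)
    (term_mono f _ _ sdiff_subset)) ⟨e, he, ?_⟩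
  have heXT : ¬(e ∩ (X \ T)).Nonempty := by
    rintro ⟨a, ha⟩
    rw [mem_inter, mem_sdiff] at ha
    exact ha.2.2 (heT ha.1)
  have heT' : (e ∩ T).Nonempty := by
    rw [inter_eq_left.2 heT]
    exact heX.mono inter_subset_left
  rw [if_neg heXT, if_pos heX, if_pos heT']
  split_ifs <;> omega

lemma exists_mem_of_coverage_singleton_ne_zero {u : V} (h : coverage E w {u} ≠ 0) :
    ∃ e ∈ E, u ∈ e := by
  obtain ⟨e, he, -⟩ := exists_ne_zero_of_sum_ne_zero h
  obtain ⟨heE, v, hv⟩ := mem_filter.1 he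
  rw [mem_inter, mem_singleton] at hv
  exact ⟨e, heE, hv.2 ▸ hv.1⟩

end Coverage

section Tight

variable {E : Finset (Finset V)} {w : Finset V → ℕ} {p : Finset V → ℤ}

lemma IsTight.union (hp : SkewSupermodular p) (hcover : ∀ Z, p Z ≤ coverage E w Z)
    {X T e : Finset V} (hX : IsTight E w p X) (hT : IsTight E w p T) (he : e ∈ E)
    (hwe : 0 < w e) (heT : e ⊆ T) (heX : (e ∩ X).Nonempty) :
    IsTight E w p (X ∪ T) := by
  unfold IsTight at *
  rcases hp X T with hsuper | hposi
  · have := coverage_inter_add_coverage_union_le E w X T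
    linarith [hcover (X ∩ T), hcover (X ∪ T)]
  · have := coverage_sdiff_add_coverage_sdiff_lt E w he hwe heT heX
    linarith [hcover (X \ T), hcover (T \ X)]

lemma subset_of_isTight_of_maximal (hp : SkewSupermodular p)
    (hcover : ∀ Z, p Z ≤ coverage E w Z) {X T e : Finset V} (hX : IsTight E w p X)
    (hXmax : ∀ X', IsTight E w p X' → X ⊆ X' → X = X') (hT : IsTight E w p T) (he : e ∈ E)
    (hwe : 0 < w e) (heT : e ⊆ T) (heX : (e ∩ X).Nonempty) :
    T ⊆ X :=
  union_eq_left.1 (hXmax _ (hX.union hp hcover hT he hwe heT heX) subset_union_left).symm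

end Tight

end Hypergraph

theorem maximal_tight_sets_disjoint_general {V : Type*} [DecidableEq V]
    (E : Finset (Finset V)) (w : Finset V → ℕ) (p : Finset V → ℤ)
    (hw : ∀ e ∈ E, 0 < w e)
    (hp : SkewSupermodular p)
    (hcover : ∀ Z : Finset V, p Z ≤ coverage E w Z)
    (htight : ∀ e ∈ E, ∃ X : Finset V, e ⊆ X ∧ coverage E w X = p X)
    (hdeg : ∀ u : V, coverage E w {u} ≠ 0) :
    ∀ X Y : Finset V,
      (coverage E w X = p X ∧ ∀ X' : Finset V, coverage E w X' = p X' → X ⊆ X' → X = X') →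
      (coverage E w Y = p Y ∧ ∀ Y' : Finset V, coverage E w Y' = p Y' → Y ⊆ Y' → Y = Y') →
      X ≠ Y → X ∩ Y = ∅ := by
  intro X Y ⟨hX, hXmax⟩ ⟨hY, hYmax⟩ hXY
  by_contra hmeet
  obtain ⟨u, hu⟩ := nonempty_iff_ne_empty.2 hmeet
  obtain ⟨e, he, hue⟩ := exists_mem_of_coverage_singleton_ne_zero E w (hdeg u)
  obtain ⟨T, heT, hT⟩ := htight e he
  have heX : (e ∩ X).Nonempty := ⟨u, mem_inter.2 ⟨hue, (mem_inter.1 hu).1⟩⟩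
  have heY : (e ∩ Y).Nonempty := ⟨u, mem_inter.2 ⟨hue, (mem_inter.1 hu).2⟩⟩
  have absorb {A B : Finset V} (hA : IsTight E w p A)
      (hAmax : ∀ A', IsTight E w p A' → A ⊆ A' → A = A') (hB : IsTight E w p B) (heB : e ⊆ B)
      (heA : (e ∩ A).Nonempty) : B ⊆ A :=
    subset_of_isTight_of_maximal hp hcover hA hAmax hB he (hw e he) heB heA
  have hTX := absorb hX hXmax hT heT heX
  have hTY := absorb hY hYmax hT heT heY
  exact hXY (Subset.antisymm (absorb hY hYmax hX (heT.trans hTX) heY)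
    (absorb hX hXmax hY (heT.trans hTY) heX))

/-- Under the stated hypotheses, the family of inclusion-wise maximal tight sets
is a disjoint family. -/
theorem maximal_tight_sets_disjoint {V : Type*} [Fintype V] [DecidableEq V]
    (E : Finset (Finset V)) (w : Finset V → ℕ) (p : Finset V → ℤ)
    (hw : ∀ e ∈ E, 0 < w e)
    (hp : SkewSupermodular p)
    (hcover : ∀ Z : Finset V, p Z ≤ coverage E w Z)
    (htight : ∀ e ∈ E, ∃ X : Finset V, e ⊆ X ∧ coverage E w X = p X)
    (hdeg : ∀ u : V, coverage E w {u} ≠ 0) :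
    ∀ X Y : Finset V,
      (coverage E w X = p X ∧ ∀ X' : Finset V, coverage E w X' = p X' → X ⊆ X' → X = X') →
      (coverage E w Y = p Y ∧ ∀ Y' : Finset V, coverage E w Y' = p Y' → Y ⊆ Y' → Y = Y') →
      X ≠ Y → X ∩ Y = ∅ :=
  maximal_tight_sets_disjoint_general E w p hw hp hcover htight hdeg
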